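/- arXiv:q-alg/9702016 — 7 statements merged into one kernel-verified Lean document; each statement's English description precedes it below -/
import Mathlib

section
/- Let n ≥ 2 and let q be a nonzero complex number. For every function L : ℂ → Mₙ(ℂ) such that for all z ∈ ℂ the matrix L(z) lies in M^s (i.e. det L(z) = 1, L(z)_{i,i+1} = −1 for 1 ≤ i ≤ n−1, and L(z)_{i,j} = 0 for j > i+1), there exists a unique function u : ℂ → Mₙ(ℂ) such that u(z) is lower unipotent for every z ∈ ℂ and the matrix u(qz)·L(z)·u(z)⁻¹ is in companion form for every z ∈ ℂ. (This is the cross-section theorem for the q-gauge action in the case G = SL(n): the gauge action of loops in the lower unipotent subgroup N on the cell M^s is free and the companion matrices form a cross-section.) -/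
/-- A matrix is lower unipotent if it is lower triangular with all diagonal
entries equal to `1`. -/
def LowerUnipotent {n : ℕ} (A : Matrix (Fin n) (Fin n) ℂ) : Prop :=
  (∀ i, A i i = 1) ∧ ∀ i j : Fin n, (i : ℕ) < (j : ℕ) → A i j = 0

/-- `A ∈ Mˢ`: `det A = 1`, the superdiagonal entries equal `-1`, and all entries
above the superdiagonal vanish. -/
def InMs {n : ℕ} (A : Matrix (Fin n) (Fin n) ℂ) : Prop :=
  A.det = 1 ∧ (∀ i j : Fin n, (j : ℕ) = (i : ℕ) + 1 → A i j = -1) ∧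
    ∀ i j : Fin n, (i : ℕ) + 1 < (j : ℕ) → A i j = 0

/-- A matrix is in companion form: superdiagonal `-1`, the first `n-1` rows vanish
off the superdiagonal, and the lower-left corner entry is `1` (the remaining
entries of the last row are arbitrary). -/
def CompanionForm {n : ℕ} (A : Matrix (Fin n) (Fin n) ℂ) : Prop :=
  (∀ i j : Fin n, (j : ℕ) = (i : ℕ) + 1 → A i j = -1) ∧
  (∀ i j : Fin n, (i : ℕ) < n - 1 → (j : ℕ) ≠ (i : ℕ) + 1 → A i j = 0) ∧
  (∀ i j : Fin n, (i : ℕ) = n - 1 → (j : ℕ) = 0 → A i j = 1)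

/-!
Put `C = u(qz) L(z) u(z)⁻¹`. The first `n - 1` rows of the equation `u(qz) L(z) = C u(z)` say,
for `C` of companion form, that row `i + 1` of `u(z)` is minus row `i` of `u(qz) L(z)`. Starting
from the first row `e₀` of a unipotent matrix, this recursion determines `u` uniquely, and since
`L` is lower Hessenberg with superdiagonal `-1` the rows it produces are again those of a
unipotent matrix. The last free entry, the corner `C(n-1, 0)`, equals `det C = det L = 1`
(expand along the first column).
-/

open Matrix

namespace Matrix

variable {R ι : Type*} [CommRing R] [Fintype ι] [DecidableEq ι]

theorem mul_inv_row_eq_neg_one_row_iff {P U : Matrix ι ι R} (hU : IsUnit U.det) (i i' : ι) :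
    (P * U⁻¹) i = -(1 : Matrix ι ι R) i' ↔ P i = -U i' := by
  constructor
  · intro h
    calc P i = (P * U⁻¹ * U) i := by rw [Matrix.mul_assoc, nonsing_inv_mul _ hU, Matrix.mul_one]
      _ = -U i' := by rw [mul_apply_eq_vecMul, h, neg_vecMul, ← mul_apply_eq_vecMul, Matrix.one_mul]
  · intro h
    rw [mul_apply_eq_vecMul, h, neg_vecMul, ← mul_apply_eq_vecMul, mul_nonsing_inv _ hU]

theorem det_eq_apply_last_zero {m : ℕ} (A : Matrix (Fin (m + 1)) (Fin (m + 1)) R)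
    (hrow : ∀ i : Fin m, A i.castSucc = -(1 : Matrix (Fin (m + 1)) (Fin (m + 1)) R) i.succ) :
    A.det = A (Fin.last m) 0 := by
  have hminor : A.submatrix Fin.castSucc Fin.succ = -1 := by
    ext i j
    simp [hrow, one_apply, Fin.succ_inj]
  rw [det_succ_column_zero, Finset.sum_eq_single (Fin.last m)]
  · rw [Fin.succAbove_last, hminor, det_neg, det_one, Fin.val_last, Fintype.card_fin, mul_one,
      mul_right_comm, ← pow_add, Even.neg_one_pow ⟨m, rfl⟩, one_mul]
  · intro i _ hi
    obtain ⟨i, rfl⟩ := Fin.exists_castSucc_eq.mpr hi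
    simp [hrow]
  · simp

end Matrix

variable {n : ℕ}

theorem CompanionForm.row_eq {A : Matrix (Fin n) (Fin n) ℂ} (hA : CompanionForm A)
    {i i' : Fin n} (hi : (i' : ℕ) = i + 1) : A i = -(1 : Matrix (Fin n) (Fin n) ℂ) i' := by
  ext j
  by_cases hj : j = i'
  · subst hj
    simp [hA.1 i j hi]
  · rw [hA.2.1 i j (by omega) (fun h => hj (Fin.ext (h.trans hi.symm)))]
    simp [Ne.symm hj]

theorem companionForm_of_row_eq {A : Matrix (Fin n) (Fin n) ℂ}
    (hrow : ∀ i i' : Fin n, (i' : ℕ) = i + 1 → A i = -(1 : Matrix (Fin n) (Fin n) ℂ) i')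
    (hdet : A.det = 1) : CompanionForm A := by
  refine ⟨fun i j hj => by simp [hrow i j hj], fun i j hi hj => ?_, fun i j hi hj => ?_⟩
  · rw [hrow i ⟨i + 1, by omega⟩ rfl]
    simp [Fin.ext_iff, Ne.symm hj]
  · obtain ⟨m, rfl⟩ : ∃ m, n = m + 1 := ⟨n - 1, by omega⟩
    obtain rfl : i = Fin.last m := Fin.ext (by simpa using hi)
    obtain rfl : j = 0 := Fin.ext hj
    rw [← Matrix.det_eq_apply_last_zero A fun i => hrow _ _ rfl, hdet]

theorem LowerUnipotent.det_eq_one {A : Matrix (Fin n) (Fin n) ℂ} (hA : LowerUnipotent A) :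
    A.det = 1 := by
  rw [Matrix.det_of_isLowerTriangular A fun i j hij => hA.2 i j hij]
  exact Finset.prod_eq_one fun i _ => hA.1 i

def IsHessenbergNegOne (A : Matrix (Fin n) (Fin n) ℂ) : Prop :=
  (∀ i j : Fin n, (j : ℕ) = i + 1 → A i j = -1) ∧ ∀ i j : Fin n, (i : ℕ) + 1 < j → A i j = 0

theorem InMs.isHessenbergNegOne {A : Matrix (Fin n) (Fin n) ℂ} (hA : InMs A) :
    IsHessenbergNegOne A :=
  hA.2

noncomputable def gaugeRow (q : ℂ) (L : ℂ → Matrix (Fin n) (Fin n) ℂ) : ℕ → ℂ → Fin n → ℂ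
  | 0, _ => fun j => if (j : ℕ) = 0 then 1 else 0
  | k + 1, z => -(gaugeRow q L k (q * z) ᵥ* L z)

noncomputable def gaugeMatrix (q : ℂ) (L : ℂ → Matrix (Fin n) (Fin n) ℂ) (z : ℂ) :
    Matrix (Fin n) (Fin n) ℂ :=
  Matrix.of fun i => gaugeRow q L i z

theorem gaugeRow_apply_of_le {q : ℂ} {L : ℂ → Matrix (Fin n) (Fin n) ℂ}
    (hL : ∀ z, IsHessenbergNegOne (L z)) {k : ℕ} (hk : k < n) (z : ℂ) {j : Fin n}
    (hj : k ≤ j) : gaugeRow q L k z j = if (j : ℕ) = k then 1 else 0 := by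
  induction k generalizing z j with
  | zero => rfl
  | succ k ih =>
    have hk' : k < n := by omega
    simp only [gaugeRow, Pi.neg_apply, Matrix.vecMul, dotProduct]
    rw [Finset.sum_eq_single ⟨k, hk'⟩]
    · rw [ih hk' (q * z) le_rfl, if_pos rfl, one_mul]
      rcases hj.eq_or_lt with hj' | hj'
      · simp [(hL z).1 ⟨k, hk'⟩ j hj'.symm, ← hj']
      · simp [(hL z).2 ⟨k, hk'⟩ j hj', hj'.ne']
    · intro m _ hm
      rcases Nat.lt_or_gt_of_ne (show (m : ℕ) ≠ k from fun h => hm (Fin.ext h)) with hmk | hmk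
      · rw [(hL z).2 m j (by omega), mul_zero]
      · rw [ih hk' (q * z) hmk.le, if_neg hmk.ne', zero_mul]
    · simp

theorem lowerUnipotent_gaugeMatrix {q : ℂ} {L : ℂ → Matrix (Fin n) (Fin n) ℂ}
    (hL : ∀ z, IsHessenbergNegOne (L z)) (z : ℂ) : LowerUnipotent (gaugeMatrix q L z) :=
  ⟨fun i => by simp [gaugeMatrix, gaugeRow_apply_of_le hL i.isLt z le_rfl],
    fun i j hij => by simp [gaugeMatrix, gaugeRow_apply_of_le hL i.isLt z hij.le, hij.ne']⟩

theorem gaugeMatrix_mul_row_eq (q : ℂ) (L : ℂ → Matrix (Fin n) (Fin n) ℂ) (z : ℂ)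
    {i i' : Fin n} (hi : (i' : ℕ) = i + 1) :
    (gaugeMatrix q L (q * z) * L z) i = -gaugeMatrix q L z i' := by
  have hrow : gaugeMatrix q L z i' = gaugeRow q L (i + 1) z := congrArg (gaugeRow q L · z) hi
  rw [mul_apply_eq_vecMul, hrow, gaugeRow, neg_neg]
  rfl

theorem eq_gaugeMatrix {q : ℂ} {L : ℂ → Matrix (Fin n) (Fin n) ℂ}
    {u : ℂ → Matrix (Fin n) (Fin n) ℂ} (hu : ∀ z, LowerUnipotent (u z))
    (hrow : ∀ z (i i' : Fin n), (i' : ℕ) = i + 1 → (u (q * z) * L z) i = -u z i') :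
    u = gaugeMatrix q L := by
  suffices h : ∀ k (hk : k < n) z, u z ⟨k, hk⟩ = gaugeRow q L k z by
    funext z
    ext i j
    exact congrFun (h i i.isLt z) j
  intro k
  induction k with
  | zero =>
    intro hk z
    ext j
    by_cases hj : (j : ℕ) = 0
    · obtain rfl : j = ⟨0, hk⟩ := Fin.ext hj
      simp [gaugeRow, (hu z).1]
    · simp [gaugeRow, hj, (hu z).2 ⟨0, hk⟩ j (Nat.pos_of_ne_zero hj)]
  | succ k ih =>
    intro hk z
    rw [← neg_neg (u z _), ← hrow z ⟨k, by omega⟩ _ rfl, mul_apply_eq_vecMul, ih _ (q * z)]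
    rfl

theorem companionForm_mul_mul_inv_iff {u v L : Matrix (Fin n) (Fin n) ℂ}
    (hu : LowerUnipotent u) (hv : LowerUnipotent v) (hL : L.det = 1) :
    CompanionForm (v * L * u⁻¹) ↔ ∀ i i' : Fin n, (i' : ℕ) = i + 1 → (v * L) i = -u i' := by
  have hu' : IsUnit u.det := by rw [hu.det_eq_one]; exact isUnit_one
  refine ⟨fun hC i i' hi => (mul_inv_row_eq_neg_one_row_iff hu' i i').1 (hC.row_eq hi),
    fun hrow => companionForm_of_row_eq
      (fun i i' hi => (mul_inv_row_eq_neg_one_row_iff hu' i i').2 (hrow i i' hi)) ?_⟩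
  simp [det_mul, hu.det_eq_one, hv.det_eq_one, hL]

theorem crossSection_q_gauge_SLn_general (n : ℕ) (q : ℂ)
    (L : ℂ → Matrix (Fin n) (Fin n) ℂ) (hL : ∀ z : ℂ, InMs (L z)) :
    ∃! u : ℂ → Matrix (Fin n) (Fin n) ℂ,
      (∀ z : ℂ, LowerUnipotent (u z)) ∧
      ∀ z : ℂ, CompanionForm (u (q * z) * L z * (u z)⁻¹) := by
  have hU : ∀ z, LowerUnipotent (gaugeMatrix q L z) :=
    lowerUnipotent_gaugeMatrix fun z => (hL z).isHessenbergNegOne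
  refine ⟨gaugeMatrix q L, ⟨hU, fun z => ?_⟩, fun u ⟨hu, hC⟩ => ?_⟩
  · rw [companionForm_mul_mul_inv_iff (hU z) (hU (q * z)) (hL z).1]
    exact fun i i' => gaugeMatrix_mul_row_eq q L z
  · exact eq_gaugeMatrix hu fun z =>
      (companionForm_mul_mul_inv_iff (hu z) (hu (q * z)) (hL z).1).1 (hC z)

/-- The cross-section theorem for the q-gauge action in the case `G = SL(n)`:
for every function `L : ℂ → Mₙ(ℂ)` with values in the cell `Mˢ` there is a unique
function `u` with lower unipotent values such that the q-gauge transform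
`z ↦ u(qz)·L(z)·u(z)⁻¹` is everywhere in companion form. -/
theorem crossSection_q_gauge_SLn (n : ℕ) (hn : 2 ≤ n) (q : ℂ) (hq : q ≠ 0)
    (L : ℂ → Matrix (Fin n) (Fin n) ℂ) (hL : ∀ z : ℂ, InMs (L z)) :
    ∃! u : ℂ → Matrix (Fin n) (Fin n) ℂ,
      (∀ z : ℂ, LowerUnipotent (u z)) ∧
      ∀ z : ℂ, CompanionForm (u (q * z) * L z * (u z)⁻¹) :=
  crossSection_q_gauge_SLn_general n q L hL
end

section
/- Let n ≥ 2 and let s⁻¹ ∈ SL(n,ℂ) be the matrix with entries (s⁻¹)_{i,i+1} = −1 for 1 ≤ i ≤ n−1, (s⁻¹)_{n,1} = 1, and all other entries 0. Every matrix A ∈ Mₙ(ℂ) with det A = 1, A_{i,i+1} = −1 for 1 ≤ i ≤ n−1, and A_{i,j} = 0 for j > i+1 (i.e. A ∈ M^s) admits a unique factorization A = v·s⁻¹·u, where v is a lower unipotent matrix equal to the identity matrix outside its last row and u is a lower unipotent matrix. Equivalently, the map N′ × N → M^s, (v,u) ↦ v s⁻¹ u, is a bijection. -/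
/-- `v ∈ N′`: `v` is lower unipotent and agrees with the identity matrix in all
rows except possibly the last one. -/
def InNPrime {n : ℕ} (v : Matrix (Fin n) (Fin n) ℂ) : Prop :=
  LowerUnipotent v ∧
    ∀ i j : Fin n, (i : ℕ) ≠ n - 1 → v i j = (1 : Matrix (Fin n) (Fin n) ℂ) i j

/-- The matrix `s⁻¹` representing (the inverse of) the Coxeter element of `SL(n)`:
`(s⁻¹)_{i,i+1} = -1`, `(s⁻¹)_{n,1} = 1`, and `0` elsewhere. -/
def sInvMat (n : ℕ) : Matrix (Fin n) (Fin n) ℂ := fun i j =>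
  if (j : ℕ) = (i : ℕ) + 1 then -1
  else if (i : ℕ) = n - 1 ∧ (j : ℕ) = 0 then 1 else 0

/-!
For `v ∈ N′`, rows `0, …, n-2` of `v s⁻¹ u` are those of `s⁻¹ u`, i.e. minus rows `1, …, n-1`
of `u`. Hence `v s⁻¹ u ∈ Mˢ`, and for `A ∈ Mˢ` the factor `u` is read off from the first `n-1`
rows of `A`. Then `v = A (s⁻¹ u)⁻¹` is forced; its first `n-1` rows are identity rows because
`A` and `s⁻¹ u` share them, and `det v = det A = 1` makes its last diagonal entry `1`.
-/

open Matrix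

variable {n : ℕ}

theorem LowerUnipotent.isLowerTriangular {u : Matrix (Fin n) (Fin n) ℂ} (hu : LowerUnipotent u) :
    u.IsLowerTriangular :=
  fun i j hij => hu.2 i j hij

theorem LowerUnipotent.det_eq_one_s1 {u : Matrix (Fin n) (Fin n) ℂ} (hu : LowerUnipotent u) :
    u.det = 1 := by
  simp [det_of_isLowerTriangular u hu.isLowerTriangular, hu.1]

theorem LowerUnipotent.apply_of_val_eq_zero {u : Matrix (Fin n) (Fin n) ℂ} (hu : LowerUnipotent u)
    {k : Fin n} (hk : (k : ℕ) = 0) (j : Fin n) : u k j = (1 : Matrix (Fin n) (Fin n) ℂ) k j := by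
  by_cases hkj : k = j
  · rw [hkj, hu.1, one_apply_eq]
  · rw [one_apply_ne hkj, hu.2 k j (by have := Fin.val_ne_of_ne hkj; omega)]

theorem InNPrime.row_eq {v : Matrix (Fin n) (Fin n) ℂ} (hv : InNPrime v) {i : Fin n}
    (hi : (i : ℕ) ≠ n - 1) : v i = (1 : Matrix (Fin n) (Fin n) ℂ) i :=
  funext fun j => hv.2 i j hi

theorem inNPrime_of_det_eq_one {v : Matrix (Fin n) (Fin n) ℂ}
    (hrow : ∀ i j : Fin n, (i : ℕ) ≠ n - 1 → v i j = (1 : Matrix (Fin n) (Fin n) ℂ) i j)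
    (hdet : v.det = 1) : InNPrime v := by
  have htri : v.IsLowerTriangular := fun i j hij => by
    have hij : i < j := hij
    rw [hrow i j (by have := j.isLt; have : (i : ℕ) < j := hij; omega), one_apply_ne hij.ne]
  refine ⟨⟨fun i => ?_, fun i j hij => htri hij⟩, hrow⟩
  by_cases hi : (i : ℕ) = n - 1
  · have hother : ∀ k ≠ i, v k k = 1 := fun k hk => by
      rw [hrow k k fun h => hk (Fin.ext (h.trans hi.symm)), one_apply_eq]
    rw [← hdet, det_of_isLowerTriangular v htri, Fintype.prod_eq_single i hother]
  · rw [hrow i i hi, one_apply_eq]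

theorem mul_apply_of_row_eq {ι κ ο R : Type*} [Fintype κ] [NonUnitalNonAssocSemiring R]
    {A B : Matrix ι κ R} (C : Matrix κ ο R) {i : ι} (h : A i = B i) (j : ο) :
    (A * C) i j = (B * C) i j := by
  simp only [mul_apply, h]

theorem sInvMat_succ (m : ℕ) :
    sInvMat (m + 1) = diagonal (fun i => if i = Fin.last m then 1 else -1) *
      (finRotate (m + 1)).permMatrix ℂ := by
  ext i j
  simp only [diagonal_mul, PEquiv.toMatrix_apply, Equiv.toPEquiv_apply, Option.mem_some_iff,
    Fin.ext_iff, coe_finRotate, sInvMat, Fin.val_last]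
  split_ifs <;> first | omega | simp

theorem det_sInvMat (n : ℕ) : (sInvMat n).det = 1 := by
  cases n with
  | zero => exact det_isEmpty
  | succ m =>
    rw [sInvMat_succ, det_mul, det_diagonal, det_permutation, sign_finRotate,
      Fin.prod_univ_castSucc]
    simp [Fin.castSucc_ne_last, ← mul_pow]

theorem det_sInvMat_mul {u : Matrix (Fin n) (Fin n) ℂ} (hu : LowerUnipotent u) :
    (sInvMat n * u).det = 1 := by
  rw [det_mul, det_sInvMat, hu.det_eq_one_s1, one_mul]

theorem sInvMat_mul_apply_of_lt (u : Matrix (Fin n) (Fin n) ℂ) {i : Fin n} (h : (i : ℕ) + 1 < n)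
    (j : Fin n) : (sInvMat n * u) i j = -u ⟨i + 1, h⟩ j := by
  rw [mul_apply, Finset.sum_eq_single_of_mem ⟨i + 1, h⟩ (Finset.mem_univ _)]
  · simp [sInvMat]
  · intro l _ hl
    have hl' : (l : ℕ) ≠ i + 1 := fun h => hl (Fin.ext h)
    simp [sInvMat, hl', show (i : ℕ) ≠ n - 1 by omega]

theorem InNPrime.mul_sInvMat_mul_apply_of_lt {v : Matrix (Fin n) (Fin n) ℂ} (hv : InNPrime v)
    (u : Matrix (Fin n) (Fin n) ℂ) {i : Fin n} (h : (i : ℕ) + 1 < n) (j : Fin n) :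
    (v * sInvMat n * u) i j = -u ⟨i + 1, h⟩ j := by
  rw [Matrix.mul_assoc, mul_apply_of_row_eq _ (hv.row_eq (by omega)), Matrix.one_mul,
    sInvMat_mul_apply_of_lt]

theorem inMs_mul_sInvMat_mul {v u : Matrix (Fin n) (Fin n) ℂ} (hv : InNPrime v)
    (hu : LowerUnipotent u) : InMs (v * sInvMat n * u) := by
  refine ⟨?_, fun i j hij => ?_, fun i j hij => ?_⟩
  · rw [Matrix.mul_assoc, det_mul, det_sInvMat_mul hu, hv.1.det_eq_one_s1, one_mul]
  · have h : (i : ℕ) + 1 < n := hij ▸ j.isLt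
    rw [hv.mul_sInvMat_mul_apply_of_lt u h, show (⟨i + 1, h⟩ : Fin n) = j from Fin.ext hij.symm,
      hu.1]
  · rw [hv.mul_sInvMat_mul_apply_of_lt u (by omega), hu.2 _ _ hij, neg_zero]

/-- The only possible `u` in a factorization `A = v s⁻¹ u` with `v ∈ N′`. -/
def unipotentFactor (A : Matrix (Fin n) (Fin n) ℂ) : Matrix (Fin n) (Fin n) ℂ :=
  fun k j => if (k : ℕ) = 0 then (1 : Matrix (Fin n) (Fin n) ℂ) k j
    else -A ⟨k - 1, (Nat.sub_le _ _).trans_lt k.isLt⟩ j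

theorem unipotentFactor_apply_succ (A : Matrix (Fin n) (Fin n) ℂ) {i : Fin n}
    (h : (i : ℕ) + 1 < n) (j : Fin n) : unipotentFactor A ⟨i + 1, h⟩ j = -A i j := by
  simp [unipotentFactor]

theorem lowerUnipotent_unipotentFactor {A : Matrix (Fin n) (Fin n) ℂ} (hA : InMs A) :
    LowerUnipotent (unipotentFactor A) := by
  refine ⟨fun k => ?_, fun k j hkj => ?_⟩ <;> by_cases hk : (k : ℕ) = 0 <;>
    simp only [unipotentFactor, hk, if_true, if_false]
  · exact one_apply_eq k
  · rw [hA.2.1 _ _ (by dsimp only; omega), neg_neg]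
  · exact one_apply_ne (Fin.ne_of_lt hkj)
  · rw [hA.2.2 _ _ (by dsimp only; omega), neg_zero]

theorem sInvMat_mul_unipotentFactor_apply_of_lt (A : Matrix (Fin n) (Fin n) ℂ) {i : Fin n}
    (h : (i : ℕ) + 1 < n) (j : Fin n) : (sInvMat n * unipotentFactor A) i j = A i j := by
  rw [sInvMat_mul_apply_of_lt _ h, unipotentFactor_apply_succ, neg_neg]

theorem unipotentFactor_mul_sInvMat_mul {v u : Matrix (Fin n) (Fin n) ℂ} (hv : InNPrime v)
    (hu : LowerUnipotent u) : unipotentFactor (v * sInvMat n * u) = u := by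
  ext k j
  by_cases hk : (k : ℕ) = 0
  · simp only [unipotentFactor, hk, if_true, hu.apply_of_val_eq_zero hk]
  · obtain ⟨i, h, rfl⟩ : ∃ (i : Fin n) (h : (i : ℕ) + 1 < n), k = ⟨i + 1, h⟩ :=
      ⟨⟨k - 1, by omega⟩, by dsimp only; omega, Fin.ext (by dsimp only; omega)⟩
    rw [unipotentFactor_apply_succ, hv.mul_sInvMat_mul_apply_of_lt u h, neg_neg]

theorem exists_inNPrime_eq_mul_sInvMat_mul_unipotentFactor {A : Matrix (Fin n) (Fin n) ℂ}
    (hA : InMs A) : ∃ v, InNPrime v ∧ A = v * sInvMat n * unipotentFactor A := by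
  set S := sInvMat n * unipotentFactor A
  have hS : S.det = 1 := det_sInvMat_mul (lowerUnipotent_unipotentFactor hA)
  have hSunit : IsUnit S.det := hS ▸ isUnit_one
  refine ⟨A * S⁻¹, inNPrime_of_det_eq_one (fun i j hi => ?_) ?_, ?_⟩
  · have hrow : A i = S i :=
      funext fun k => (sInvMat_mul_unipotentFactor_apply_of_lt A (by omega) k).symm
    rw [mul_apply_of_row_eq _ hrow, mul_nonsing_inv S hSunit]
  · rw [det_mul, det_nonsing_inv, hA.1, hS, Ring.inverse_one, one_mul]
  · rw [Matrix.mul_assoc (A * S⁻¹)]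
    exact (nonsing_inv_mul_cancel_right S A hSunit).symm

theorem eq_and_eq_of_mul_sInvMat_mul_eq {v u v' u' : Matrix (Fin n) (Fin n) ℂ} (hv : InNPrime v)
    (hu : LowerUnipotent u) (hv' : InNPrime v') (hu' : LowerUnipotent u')
    (h : v * sInvMat n * u = v' * sInvMat n * u') : v = v' ∧ u = u' := by
  obtain rfl : u = u' := by
    rw [← unipotentFactor_mul_sInvMat_mul hv hu, h, unipotentFactor_mul_sInvMat_mul hv' hu']
  have hunit : IsUnit (sInvMat n * u) :=
    (isUnit_iff_isUnit_det _).2 (det_sInvMat_mul hu ▸ isUnit_one)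
  rw [Matrix.mul_assoc, Matrix.mul_assoc] at h
  exact ⟨hunit.mul_left_inj.1 h, rfl⟩

theorem bruhat_cell_factorization_SLn_general (n : ℕ) :
    (∀ v u : Matrix (Fin n) (Fin n) ℂ, InNPrime v → LowerUnipotent u →
      InMs (v * sInvMat n * u)) ∧
    ∀ A : Matrix (Fin n) (Fin n) ℂ, InMs A →
      ∃! vu : Matrix (Fin n) (Fin n) ℂ × Matrix (Fin n) (Fin n) ℂ,
        (InNPrime vu.1 ∧ LowerUnipotent vu.2) ∧ A = vu.1 * sInvMat n * vu.2 := by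
  refine ⟨fun v u hv hu => inMs_mul_sInvMat_mul hv hu, fun A hA => ?_⟩
  have hu := lowerUnipotent_unipotentFactor hA
  obtain ⟨v, hv, hA_eq⟩ := exists_inNPrime_eq_mul_sInvMat_mul_unipotentFactor hA
  refine ⟨(v, unipotentFactor A), ⟨⟨hv, hu⟩, hA_eq⟩, ?_⟩
  rintro ⟨v', u'⟩ ⟨⟨hv', hu'⟩, hA'⟩
  obtain ⟨rfl, rfl⟩ := eq_and_eq_of_mul_sInvMat_mul_eq hv' hu' hv hu (hA'.symm.trans hA_eq)
  rfl

/-- Every `A ∈ Mˢ` factors uniquely as `A = v·s⁻¹·u` with `v ∈ N′` and `u ∈ N`;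
equivalently, `N′ × N → Mˢ`, `(v,u) ↦ v s⁻¹ u`, is a bijection. -/
theorem bruhat_cell_factorization_SLn (n : ℕ) (hn : 2 ≤ n) :
    (∀ v u : Matrix (Fin n) (Fin n) ℂ, InNPrime v → LowerUnipotent u →
      InMs (v * sInvMat n * u)) ∧
    ∀ A : Matrix (Fin n) (Fin n) ℂ, InMs A →
      ∃! vu : Matrix (Fin n) (Fin n) ℂ × Matrix (Fin n) (Fin n) ℂ,
        (InNPrime vu.1 ∧ LowerUnipotent vu.2) ∧ A = vu.1 * sInvMat n * vu.2 :=
  bruhat_cell_factorization_SLn_general n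
end

section
/- Let n ≥ 2, let ω ∈ ℂ be a primitive n-th root of unity, and let x ∈ ℂ with xⁿ ≠ 1 (so that 1 − xωᵏ ≠ 0 for all k). Then: (i) (1/n)·Σ_{k=1}^{n−1} (1−ωᵏ)/(1−xωᵏ) = (1−x^{n−1})/(1−xⁿ); and (ii) for every integer d with 1 ≤ d ≤ n−1, (1/n)·Σ_{k=1}^{n−1} ω^{kd}(1−ωᵏ)/(1−xωᵏ) = x^{n−d−1}(x−1)/(1−xⁿ). (This is the root-of-unity summation identity, with corrected exponents, used to derive the Frenkel–Reshetikhin Poisson brackets of the Λ_p(z) from the Coxeter-element r-matrix in the SL(n) case, where x = qᵐ and d = s−p.) -/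
/-!
Expanding `1 / (1 - x ωᵏ) = (∑_{i<n} xⁱ ωᵏⁱ) / (1 - xⁿ)` (valid because `(x ωᵏ)ⁿ = xⁿ`) and
summing over all `k < n`, orthogonality of the characters `k ↦ ωᵏᵐ` keeps from
`∑_k ωᵏᵈ / (1 - x ωᵏ)` only the power `xʲ` with `n ∣ d + j`. The summand
`ωᵏᵈ (1 - ωᵏ) / (1 - x ωᵏ)` is the difference of two such sums (for `d` and `d + 1`), and it
vanishes at `k = 0`, so the sum over `1 ≤ k ≤ n - 1` equals the one over `k < n`.
-/

open Finset

namespace IsPrimitiveRoot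

theorem geom_sum_pow_eq_ite {R : Type*} [CommRing R] [IsDomain R] {ω : R} {n : ℕ}
    (hω : IsPrimitiveRoot ω n) (m : ℕ) :
    ∑ k ∈ range n, (ω ^ m) ^ k = if n ∣ m then (n : R) else 0 := by
  split_ifs with hm
  · simp [(hω.pow_eq_one_iff_dvd m).mpr hm]
  · have hne : ω ^ m - 1 ≠ 0 := sub_ne_zero.mpr fun h => hm ((hω.pow_eq_one_iff_dvd m).mp h)
    have hpow : (ω ^ m) ^ n = 1 := by rw [← pow_mul, mul_comm, pow_mul, hω.pow_eq_one, one_pow]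
    refine (mul_eq_zero.mp ?_).resolve_right hne
    rw [geom_sum_mul, hpow, sub_self]

variable {K : Type*} [Field K] {ω x : K} {n : ℕ}

theorem sum_pow_div_one_sub_mul_pow (hω : IsPrimitiveRoot ω n) (hx : x ^ n ≠ 1) {d j : ℕ}
    (hj : j < n) (hdj : n ∣ d + j) :
    ∑ k ∈ range n, ω ^ (k * d) / (1 - x * ω ^ k) = n * x ^ j / (1 - x ^ n) := by
  have hxn : 1 - x ^ n ≠ 0 := sub_ne_zero.mpr hx.symm
  have expand : ∀ k, ω ^ (k * d) / (1 - x * ω ^ k) =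
      (∑ i ∈ range n, x ^ i * (ω ^ (d + i)) ^ k) / (1 - x ^ n) := by
    intro k
    have hpow : (x * ω ^ k) ^ n = x ^ n := by
      rw [mul_pow, ← pow_mul, mul_comm k, pow_mul, hω.pow_eq_one, one_pow, mul_one]
    have hgeom := mul_neg_geom_sum (x * ω ^ k) n
    rw [hpow] at hgeom
    have hden : 1 - x * ω ^ k ≠ 0 := fun h => hxn (by rw [← hgeom, h, zero_mul])
    rw [div_eq_div_iff hden hxn, ← hgeom, mul_sum, mul_sum, sum_mul]
    refine sum_congr rfl fun i _ => ?_
    ring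
  have unique : ∀ i ∈ range n, i ≠ j → x ^ i * (if n ∣ d + i then (n : K) else 0) = 0 := by
    intro i hi hij
    rw [if_neg, mul_zero]
    intro hdi
    have hmod : d + i ≡ d + j [MOD n] :=
      (Nat.modEq_zero_iff_dvd.mpr hdi).trans (Nat.modEq_zero_iff_dvd.mpr hdj).symm
    exact hij ((Nat.ModEq.add_left_cancel' d hmod).eq_of_lt_of_lt (mem_range.mp hi) hj)
  rw [sum_congr rfl fun k _ => expand k, ← sum_div, sum_comm]
  simp_rw [← mul_sum, hω.geom_sum_pow_eq_ite]
  rw [sum_eq_single_of_mem j (mem_range.mpr hj) unique, if_pos hdj, mul_comm]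

theorem sum_pow_mul_one_sub_pow_div_one_sub_mul_pow (hω : IsPrimitiveRoot ω n) (hx : x ^ n ≠ 1)
    {d i j : ℕ} (hi : i < n) (hdi : n ∣ d + i) (hj : j < n) (hdj : n ∣ d + 1 + j) :
    ∑ k ∈ range n, ω ^ (k * d) * (1 - ω ^ k) / (1 - x * ω ^ k) =
      n * (x ^ i - x ^ j) / (1 - x ^ n) := by
  have split : ∀ k, ω ^ (k * d) * (1 - ω ^ k) / (1 - x * ω ^ k) =
      ω ^ (k * d) / (1 - x * ω ^ k) - ω ^ (k * (d + 1)) / (1 - x * ω ^ k) := by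
    intro k
    rw [← sub_div, mul_add_one, pow_add, mul_one_sub]
  rw [sum_congr rfl fun k _ => split k, sum_sub_distrib,
    hω.sum_pow_div_one_sub_mul_pow hx hi hdi, hω.sum_pow_div_one_sub_mul_pow hx hj hdj]
  ring

end IsPrimitiveRoot

theorem Finset.sum_Icc_one_sub_one_eq_sum_range {M : Type*} [AddCommMonoid M] {f : ℕ → M}
    (hf : f 0 = 0) (n : ℕ) : ∑ k ∈ Icc 1 (n - 1), f k = ∑ k ∈ range n, f k := by
  refine sum_subset (fun k hk => ?_) fun k hk hk' => ?_
  · simp only [mem_Icc, mem_range] at hk ⊢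
    omega
  · simp only [mem_Icc, mem_range] at hk hk'
    rwa [show k = 0 by omega]

theorem root_of_unity_summation_general (n : ℕ) (ω : ℂ)
    (hω : ω ^ n = 1) (hprim : ∀ k : ℕ, 1 ≤ k → k ≤ n - 1 → ω ^ k ≠ 1)
    (x : ℂ) (hx : x ^ n ≠ 1) :
    ((n : ℂ)⁻¹ * ∑ k ∈ Finset.Icc 1 (n - 1), (1 - ω ^ k) / (1 - x * ω ^ k) =
        (1 - x ^ (n - 1)) / (1 - x ^ n)) ∧
    ∀ d : ℕ, 1 ≤ d → d ≤ n - 1 →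
      (n : ℂ)⁻¹ * ∑ k ∈ Finset.Icc 1 (n - 1),
          ω ^ (k * d) * (1 - ω ^ k) / (1 - x * ω ^ k) =
        x ^ (n - d - 1) * (x - 1) / (1 - x ^ n) := by
  have hn : n ≠ 0 := by
    rintro rfl
    exact hx (pow_zero x)
  have hroot : IsPrimitiveRoot ω n :=
    .mk_of_lt ω (Nat.pos_of_ne_zero hn) hω fun l hl hln => hprim l hl (by omega)
  have hxn : 1 - x ^ n ≠ 0 := sub_ne_zero.mpr hx.symm
  constructor
  · have h := hroot.sum_pow_mul_one_sub_pow_div_one_sub_mul_pow hx (d := 0) (i := 0) (j := n - 1)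
      (by omega) (by simp) (by omega) (by rw [Nat.add_sub_cancel' (by omega)])
    simp only [mul_zero, pow_zero, one_mul] at h
    rw [sum_Icc_one_sub_one_eq_sum_range (by simp), h]
    field_simp
  · intro d hd1 hdn
    rw [sum_Icc_one_sub_one_eq_sum_range (by simp),
      hroot.sum_pow_mul_one_sub_pow_div_one_sub_mul_pow hx (i := n - d) (j := n - d - 1)
        (by omega) (by rw [Nat.add_sub_cancel' (by omega)]) (by omega)
        (by rw [show d + 1 + (n - d - 1) = n by omega])]
    rw [← Nat.sub_add_cancel (show 1 ≤ n - d by omega), pow_succ, Nat.add_sub_cancel]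
    field_simp

/-- Root-of-unity summation identities: if `ω` is a primitive n-th root of unity
and `xⁿ ≠ 1`, then
`(1/n)·Σ_{k=1}^{n-1} (1-ωᵏ)/(1-xωᵏ) = (1-x^{n-1})/(1-xⁿ)` and, for `1 ≤ d ≤ n-1`,
`(1/n)·Σ_{k=1}^{n-1} ω^{kd}(1-ωᵏ)/(1-xωᵏ) = x^{n-d-1}(x-1)/(1-xⁿ)`. -/
theorem root_of_unity_summation (n : ℕ) (hn : 2 ≤ n) (ω : ℂ)
    (hω : ω ^ n = 1) (hprim : ∀ k : ℕ, 1 ≤ k → k ≤ n - 1 → ω ^ k ≠ 1)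
    (x : ℂ) (hx : x ^ n ≠ 1) :
    ((n : ℂ)⁻¹ * ∑ k ∈ Finset.Icc 1 (n - 1), (1 - ω ^ k) / (1 - x * ω ^ k) =
        (1 - x ^ (n - 1)) / (1 - x ^ n)) ∧
    ∀ d : ℕ, 1 ≤ d → d ≤ n - 1 →
      (n : ℂ)⁻¹ * ∑ k ∈ Finset.Icc 1 (n - 1),
          ω ^ (k * d) * (1 - ω ^ k) / (1 - x * ω ^ k) =
        x ^ (n - d - 1) * (x - 1) / (1 - x ^ n) :=
  root_of_unity_summation_general n ω hω hprim x hx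
end

section
/- Let n ≥ 2. Let s ∈ SL(n,ℂ) be the inverse of the matrix s⁻¹ with (s⁻¹)_{i,i+1} = −1 for 1 ≤ i ≤ n−1, (s⁻¹)_{n,1} = 1 and 0 elsewhere, and let f ∈ SL(n,ℂ) be the upper bidiagonal matrix with f_{i,i} = 1 for all i, f_{i,i+1} = −1 for 1 ≤ i ≤ n−1, and 0 elsewhere. For every diagonal matrix x = diag(x₁,…,xₙ) with x₁x₂···xₙ = 1, the matrix i(x) := x·f·(s x⁻¹ s⁻¹) equals the upper bidiagonal matrix with diagonal entries (x₁x_n⁻¹, x₂x₁⁻¹, …, x_n x_{n−1}⁻¹) and with −1 in the entries (i,i+1), and moreover i(x) lies in N s⁻¹ N ∩ B̄, i.e. i(x) is upper triangular and can be written as i(x) = v·s⁻¹·u with v a lower unipotent matrix equal to the identity outside its last row and u a lower unipotent matrix. -/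
/-- The upper bidiagonal unipotent matrix `f` with `f_{i,i} = 1`,
`f_{i,i+1} = -1`, and `0` elsewhere. -/
def fMat (n : ℕ) : Matrix (Fin n) (Fin n) ℂ := fun i j =>
  if i = j then 1 else if (j : ℕ) = (i : ℕ) + 1 then -1 else 0

/-!
Conjugating a diagonal matrix by `s⁻¹` shifts its diagonal cyclically, so
`i(x) = diag(x) · f · diag(x_{j-1}⁻¹)`, which is upper bidiagonal with the stated entries.

For the factorization: `s⁻¹` is a signed cyclic shift of rows, `(s⁻¹ A)ᵢ = ± Aᵢ₊₁`. Taking for `u`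
the rows of `-i(x)` shifted down by one, with `e₀` on top, `s⁻¹ u` agrees with `i(x)` except in
the last row, which is `e₀`. Since the column sums of `f` are `e₀`, we have
`∑ₖ xₖ⁻¹ i(x)ₖ = x₋₁⁻¹ e₀` (indices mod `n`): `e₀` is a combination of the rows of `i(x)` with last
coefficient `1`. Subtracting its other terms, which is what the last row of `v` does, turns `e₀`
back into the last row of `i(x)`.
-/

open Matrix

namespace Fin

variable {n : ℕ} [NeZero n]

theorem add_one_eq_zero_iff_val_eq {i : Fin n} : i + 1 = 0 ↔ (i : ℕ) = n - 1 := by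
  obtain ⟨m, rfl⟩ := Nat.exists_eq_succ_of_ne_zero (NeZero.ne n)
  rw [Nat.succ_sub_one, show (i : ℕ) = m ↔ i = last m by rw [Fin.ext_iff, val_last]]
  exact ⟨fun h => add_right_cancel (h.trans (last_add_one m).symm),
    fun h => h ▸ last_add_one m⟩

theorem val_add_one_of_val_ne {i : Fin n} (hi : (i : ℕ) ≠ n - 1) :
    ((i + 1 : Fin n) : ℕ) = i + 1 :=
  val_add_one_of_lt' (by omega)

theorem val_eq_val_add_one_iff {i j : Fin n} : (j : ℕ) = i + 1 ↔ j ≠ 0 ∧ i = j - 1 := by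
  constructor
  · intro h
    have hj : j ≠ 0 := fun hj => by simp [hj] at h
    exact ⟨hj, Fin.ext (by rw [val_sub_one_of_ne_zero hj]; omega)⟩
  · rintro ⟨hj, rfl⟩
    have := Fin.pos_iff_ne_zero.mpr hj
    rw [val_sub_one_of_ne_zero hj]
    omega

end Fin

namespace Miura

variable {n : ℕ}

noncomputable def miuraV (x : Fin n → ℂ) : Matrix (Fin n) (Fin n) ℂ := fun i j =>
  if (i : ℕ) = n - 1 ∧ i ≠ j then -(x i * (x j)⁻¹) else (1 : Matrix (Fin n) (Fin n) ℂ) i j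

lemma inNPrime_miuraV (x : Fin n → ℂ) : InNPrime (miuraV x) := by
  refine ⟨⟨fun i => by simp [miuraV], fun i j hij => ?_⟩, fun i j hi => by simp [miuraV, hi]⟩
  rw [miuraV, if_neg (by omega), one_apply_ne (Fin.ne_of_lt hij)]

variable [NeZero n]

def sInvSign (i : Fin n) : ℂ := if i + 1 = 0 then 1 else -1

lemma sInvMat_eq : sInvMat n = diagonal sInvSign * (Equiv.addRight (1 : Fin n)).permMatrix ℂ := by
  ext i j
  simp only [diagonal_mul, Equiv.Perm.permMatrix, PEquiv.toMatrix_apply, sInvMat, sInvSign,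
    Equiv.toPEquiv_apply, Equiv.coe_addRight, Option.mem_def, Option.some_inj, mul_ite, mul_one,
    mul_zero]
  have := j.isLt
  by_cases hlast : (i : ℕ) = n - 1
  · have h0 : i + 1 = 0 := Fin.add_one_eq_zero_iff_val_eq.mpr hlast
    simp only [h0, hlast, true_and, if_true, Fin.ext_iff (a := 0), Fin.val_zero]
    split_ifs <;> first | rfl | omega
  · have h0 : i + 1 ≠ 0 := mt Fin.add_one_eq_zero_iff_val_eq.mp hlast
    simp only [h0, hlast, false_and, if_false, @eq_comm _ (i + 1) j, Fin.ext_iff (b := i + 1),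
      Fin.val_add_one_of_val_ne hlast]

lemma sInvMat_mul_apply (A : Matrix (Fin n) (Fin n) ℂ) (i j : Fin n) :
    (sInvMat n * A) i j = sInvSign i * A (i + 1) j := by
  rw [sInvMat_eq, Matrix.mul_assoc, Equiv.Perm.permMatrix, PEquiv.toMatrix_toPEquiv_mul,
    diagonal_mul]
  rfl

lemma sInvMat_apply (i j : Fin n) : sInvMat n i j = if j = i + 1 then sInvSign i else 0 := by
  simpa [one_apply, eq_comm] using sInvMat_mul_apply 1 i j

lemma isUnit_sInvMat : IsUnit (sInvMat n) := by
  have hsign (i : Fin n) : IsUnit (sInvSign i) := by unfold sInvSign; split_ifs <;> simp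
  rw [sInvMat_eq, isUnit_iff_isUnit_det, det_mul, det_diagonal, Matrix.det_permutation]
  exact (IsUnit.prod_univ_iff.mpr hsign).mul ((Equiv.Perm.sign _).isUnit.map (Int.castRingHom ℂ))

lemma diagonal_mul_sInvMat (d : Fin n → ℂ) :
    diagonal d * sInvMat n = sInvMat n * diagonal fun j => d (j - 1) := by
  ext i j
  rw [diagonal_mul, sInvMat_mul_apply, diagonal_apply, sInvMat_apply]
  by_cases h : j = i + 1
  · simp [h, mul_comm]
  · simp [h, Ne.symm h]

lemma inv_sInvMat_mul_diagonal_mul_sInvMat (d : Fin n → ℂ) :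
    (sInvMat n)⁻¹ * diagonal d * sInvMat n = diagonal fun j => d (j - 1) := by
  rw [Matrix.mul_assoc, diagonal_mul_sInvMat,
    nonsing_inv_mul_cancel_left _ _ ((isUnit_iff_isUnit_det _).mp isUnit_sInvMat)]

noncomputable def miuraMat (x : Fin n → ℂ) : Matrix (Fin n) (Fin n) ℂ := fun i j =>
  if i = j then x i * (x (i - 1))⁻¹ else if (j : ℕ) = (i : ℕ) + 1 then -1 else 0

lemma diagonal_mul_fMat_mul_diagonal {x : Fin n → ℂ} (hx : ∀ i, x i ≠ 0) :
    diagonal x * fMat n * diagonal (fun j => (x (j - 1))⁻¹) = miuraMat x := by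
  ext i j
  rw [mul_diagonal, diagonal_mul, fMat, miuraMat]
  split_ifs with hij hsucc
  · rw [hij, mul_one]
  · rw [← (Fin.val_eq_val_add_one_iff.mp hsucc).2, mul_neg_one, neg_mul, mul_inv_cancel₀ (hx i)]
  · rw [mul_zero, zero_mul]

lemma miuraMat_apply_of_lt (x : Fin n → ℂ) {i j : Fin n} (h : (j : ℕ) < i) :
    miuraMat x i j = 0 := by
  rw [miuraMat, if_neg (by rintro rfl; omega), if_neg (by omega)]

lemma vecMul_one_fMat : vecMul 1 (fMat n) = Pi.single 0 1 := by
  ext j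
  simp only [vecMul, dotProduct, Pi.one_apply, one_mul, fMat, Fin.val_eq_val_add_one_iff]
  by_cases hj : j = 0
  · rw [Fintype.sum_eq_single 0 fun i hi => by simp [hi, hj]]
    simp [hj]
  · have hne : j - 1 ≠ j := fun h => hj <| by
      simpa using congrArg (j * ·) (sub_eq_self.mp h)
    rw [Fintype.sum_eq_add (j - 1) j hne fun i hi => by simp [hi.1, hi.2]]
    simp [hj, hne]

lemma vecMul_inv_miuraMat {x : Fin n → ℂ} (hx : ∀ i, x i ≠ 0) :
    vecMul (fun i => (x i)⁻¹) (miuraMat x) = Pi.single 0 (x (-1))⁻¹ := by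
  have hdiag : vecMul (fun i => (x i)⁻¹) (diagonal x) = 1 := by
    ext i; simp [vecMul_diagonal, inv_mul_cancel₀ (hx i)]
  rw [← diagonal_mul_fMat_mul_diagonal hx, ← vecMul_vecMul, ← vecMul_vecMul, hdiag,
    vecMul_one_fMat, single_vecMul_diagonal, one_mul, zero_sub]

noncomputable def miuraU (x : Fin n → ℂ) : Matrix (Fin n) (Fin n) ℂ := fun i j =>
  if i = 0 then (1 : Matrix (Fin n) (Fin n) ℂ) i j else -miuraMat x (i - 1) j

lemma lowerUnipotent_miuraU (x : Fin n → ℂ) : LowerUnipotent (miuraU x) := by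
  refine ⟨fun i => ?_, fun i j hij => ?_⟩ <;> by_cases hi : i = 0
  · simp [miuraU, hi]
  · have hsucc : (i : ℕ) = ((i - 1 : Fin n) : ℕ) + 1 := Fin.val_eq_val_add_one_iff.mpr ⟨hi, rfl⟩
    have hne : i - 1 ≠ i := fun h => by rw [h] at hsucc; omega
    rw [miuraU, if_neg hi, miuraMat, if_neg hne, if_pos hsucc, neg_neg]
  · simp [miuraU, hi, one_apply_ne (Fin.ne_of_lt hij)]
  · have hsucc : (i : ℕ) = ((i - 1 : Fin n) : ℕ) + 1 := Fin.val_eq_val_add_one_iff.mpr ⟨hi, rfl⟩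
    have hij : (i : ℕ) < j := hij
    rw [miuraU, if_neg hi, miuraMat, if_neg (Fin.ne_of_val_ne (by omega)),
      if_neg (show (j : ℕ) ≠ ((i - 1 : Fin n) : ℕ) + 1 by omega), neg_zero]

lemma sInvMat_mul_miuraU_apply (x : Fin n → ℂ) (i j : Fin n) :
    (sInvMat n * miuraU x) i j =
      if i + 1 = 0 then (Pi.single 0 1 : Fin n → ℂ) j else miuraMat x i j := by
  rw [sInvMat_mul_apply, sInvSign, miuraU]
  by_cases h : i + 1 = 0
  · simp [h, one_apply, Pi.single_apply, eq_comm]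
  · simp [h]

theorem miuraMat_eq_miuraV_mul_sInvMat_mul_miuraU {x : Fin n → ℂ} (hx : ∀ i, x i ≠ 0) :
    miuraMat x = miuraV x * sInvMat n * miuraU x := by
  ext i j
  rw [Matrix.mul_assoc, mul_apply]
  by_cases hi : (i : ℕ) = n - 1
  · have hlast : i = -1 := eq_neg_of_add_eq_zero_left (Fin.add_one_eq_zero_iff_val_eq.mpr hi)
    have hother : ∀ k ∈ Finset.univ.erase i, miuraV x i k * (sInvMat n * miuraU x) k j =
        -x i * ((x k)⁻¹ * miuraMat x k j) := fun k hk => by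
      have hki : k ≠ i := Finset.ne_of_mem_erase hk
      have hk : k + 1 ≠ 0 := fun h => hki (hlast ▸ eq_neg_of_add_eq_zero_left h)
      rw [miuraV, if_pos ⟨hi, hki.symm⟩, sInvMat_mul_miuraU_apply, if_neg hk]
      ring
    have hcol := congr_fun (vecMul_inv_miuraMat hx) j
    rw [← hlast, vecMul, dotProduct, ← Finset.add_sum_erase _ _ (Finset.mem_univ i)] at hcol
    rw [← Finset.add_sum_erase _ _ (Finset.mem_univ i), Finset.sum_congr rfl hother,
      ← Finset.mul_sum, sInvMat_mul_miuraU_apply, if_pos (hlast ▸ neg_add_cancel 1), miuraV, if_neg (fun h => h.2 rfl), one_apply_eq, one_mul, eq_sub_of_add_eq' hcol,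
      Pi.single_apply, Pi.single_apply]
    split_ifs <;> field_simp [hx i] <;> ring
  · have hrow : miuraV x i = (1 : Matrix (Fin n) (Fin n) ℂ) i :=
      funext fun k => by simp [miuraV, hi]
    rw [hrow, ← mul_apply, Matrix.one_mul, sInvMat_mul_miuraU_apply,
      if_neg (mt Fin.add_one_eq_zero_iff_val_eq.mp hi)]

end Miura

open Miura in
theorem miura_embedding_SLn_general (n : ℕ) [NeZero n]
    (x : Fin n → ℂ) (hx : ∀ i, x i ≠ 0) :
    Matrix.diagonal x * fMat n *
        ((sInvMat n)⁻¹ * Matrix.diagonal (fun i => (x i)⁻¹) * sInvMat n) =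
      (fun i j => if i = j then x i * (x (i - 1))⁻¹
        else if (j : ℕ) = (i : ℕ) + 1 then -1 else 0) ∧
    (∀ i j : Fin n, (j : ℕ) < (i : ℕ) →
      (Matrix.diagonal x * fMat n *
        ((sInvMat n)⁻¹ * Matrix.diagonal (fun i => (x i)⁻¹) * sInvMat n)) i j = 0) ∧
    ∃ v u : Matrix (Fin n) (Fin n) ℂ, InNPrime v ∧ LowerUnipotent u ∧
      Matrix.diagonal x * fMat n *
          ((sInvMat n)⁻¹ * Matrix.diagonal (fun i => (x i)⁻¹) * sInvMat n) =
        v * sInvMat n * u := by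
  rw [inv_sInvMat_mul_diagonal_mul_sInvMat, diagonal_mul_fMat_mul_diagonal hx]
  exact ⟨rfl, fun i j => miuraMat_apply_of_lt x, miuraV x, miuraU x, inNPrime_miuraV x,
    lowerUnipotent_miuraU x, miuraMat_eq_miuraV_mul_sInvMat_mul_miuraU hx⟩

/-- For `x = diag(x₁,…,xₙ)` with `∏ xᵢ = 1`, the matrix
`i(x) = x·f·(s x⁻¹ s⁻¹)` equals the upper bidiagonal matrix with diagonal
`(x₁xₙ⁻¹, x₂x₁⁻¹, …, xₙx_{n-1}⁻¹)` and `-1` on the superdiagonal, and it lies in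
`N s⁻¹ N ∩ B̄`: it is upper triangular and factors as `v·s⁻¹·u` with `v ∈ N′`
and `u` lower unipotent. -/
theorem miura_embedding_SLn (n : ℕ) (hn : 2 ≤ n) [NeZero n]
    (x : Fin n → ℂ) (hx : ∀ i, x i ≠ 0) (hprod : ∏ i, x i = 1) :
    Matrix.diagonal x * fMat n *
        ((sInvMat n)⁻¹ * Matrix.diagonal (fun i => (x i)⁻¹) * sInvMat n) =
      (fun i j => if i = j then x i * (x (i - 1))⁻¹
        else if (j : ℕ) = (i : ℕ) + 1 then -1 else 0) ∧
    (∀ i j : Fin n, (j : ℕ) < (i : ℕ) →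
      (Matrix.diagonal x * fMat n *
        ((sInvMat n)⁻¹ * Matrix.diagonal (fun i => (x i)⁻¹) * sInvMat n)) i j = 0) ∧
    ∃ v u : Matrix (Fin n) (Fin n) ℂ, InNPrime v ∧ LowerUnipotent u ∧
      Matrix.diagonal x * fMat n *
          ((sInvMat n)⁻¹ * Matrix.diagonal (fun i => (x i)⁻¹) * sInvMat n) =
        v * sInvMat n * u :=
  miura_embedding_SLn_general n x hx
end

section
/- Let n ≥ 2 and m ≥ 1. For every function L : ℤ/mℤ → Mₙ(ℂ) such that for all a ∈ ℤ/mℤ the matrix L(a) lies in M^s (i.e. det L(a) = 1, L(a)_{i,i+1} = −1 for 1 ≤ i ≤ n−1, and L(a)_{i,j} = 0 for j > i+1), there exists a unique function u : ℤ/mℤ → Mₙ(ℂ) such that u(a) is lower unipotent for every a and the matrix u(a+1)·L(a)·u(a)⁻¹ is in companion form for every a ∈ ℤ/mℤ. (This is the lattice cross-section theorem for G = SL(n): the lattice gauge action g·x = g^τ x g⁻¹ of the group N^Γ of lower-unipotent-valued functions on the periodic lattice Γ = ℤ/mℤ, with τ the cyclic shift x_a ↦ x_{a+1}, leaves the set (M^s)^Γ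 invariant, acts freely on it, and the companion-form configurations form a cross-section.) -/
namespace CSAux

def Dmat (n : ℕ) : Matrix (Fin n) (Fin n) ℂ :=
  Matrix.of fun i j => if (i : ℕ) = (j : ℕ) + 1 then 1 else 0

def Emat (n : ℕ) : Matrix (Fin n) (Fin n) ℂ :=
  Matrix.of fun i j => if (i : ℕ) = 0 ∧ (j : ℕ) = 0 then 1 else 0

noncomputable def Fstep {n : ℕ} (A v : Matrix (Fin n) (Fin n) ℂ) : Matrix (Fin n) (Fin n) ℂ :=
  Emat n - Dmat n * v * A

lemma Dmul_zero {n : ℕ} (M : Matrix (Fin n) (Fin n) ℂ) (i j : Fin n) (hi : (i : ℕ) = 0) :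
    (Dmat n * M) i j = 0 := by
  rw [Matrix.mul_apply]
  apply Finset.sum_eq_zero
  intro k _
  simp [Dmat, hi]

lemma Dmul_succ {n : ℕ} (M : Matrix (Fin n) (Fin n) ℂ) (i' i j : Fin n)
    (h : (i : ℕ) = (i' : ℕ) + 1) : (Dmat n * M) i j = M i' j := by
  rw [Matrix.mul_apply]
  rw [Finset.sum_eq_single i']
  · simp [Dmat, h]
  · intro k _ hk
    have : (i : ℕ) ≠ (k : ℕ) + 1 := by
      intro hc; exact hk (Fin.ext (by omega))
    simp [Dmat, this]
  · simp

lemma Dpow_entry {n : ℕ} (k : ℕ) (i j : Fin n) :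
    ((Dmat n) ^ k) i j = if (i : ℕ) = (j : ℕ) + k then 1 else 0 := by
  induction k generalizing i with
  | zero => simp [Matrix.one_apply, Fin.ext_iff]
  | succ k ih =>
    rw [pow_succ']
    rcases Nat.eq_zero_or_pos (i : ℕ) with hi | hi
    · rw [Dmul_zero _ _ _ hi]
      have : (i : ℕ) ≠ (j : ℕ) + (k + 1) := by omega
      simp [this]
    · have hlt : (i : ℕ) - 1 < n := by have := i.isLt; omega
      have h : (i : ℕ) = ((⟨(i : ℕ) - 1, hlt⟩ : Fin n) : ℕ) + 1 := by simp; omega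
      rw [Dmul_succ _ ⟨(i : ℕ) - 1, hlt⟩ i j h, ih]
      by_cases hc : (i : ℕ) = (j : ℕ) + (k + 1)
      · have : ((i : ℕ) - 1) = (j : ℕ) + k := by omega
        simp [this, hc]
      · have : ((i : ℕ) - 1) ≠ (j : ℕ) + k := by omega
        simp [this, hc]

lemma Dpow_n {n : ℕ} : (Dmat n) ^ n = 0 := by
  ext i j
  rw [Dpow_entry]
  have : (i : ℕ) ≠ (j : ℕ) + n := by have := i.isLt; omega
  simp [this]

lemma det_lowerUnipotent {n : ℕ} {v : Matrix (Fin n) (Fin n) ℂ} (hv : LowerUnipotent v) :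
    v.det = 1 := by
  rw [Matrix.det_of_lowerTriangular v ?_]
  · simp [hv.1]
  · intro i j hij
    exact hv.2 i j (by simpa using hij)

/-- entries of v*A for v lower unipotent, A ∈ Ms : superdiagonal -1 -/
lemma mulMs_superdiag {n : ℕ} {v A : Matrix (Fin n) (Fin n) ℂ} (hv : LowerUnipotent v)
    (hA : InMs A) (i j : Fin n) (h : (j : ℕ) = (i : ℕ) + 1) : (v * A) i j = -1 := by
  rw [Matrix.mul_apply, Finset.sum_eq_single i]
  · rw [hv.1, hA.2.1 i j h]; ring
  · intro k _ hk
    rcases lt_or_gt_of_ne (fun hc : (k : ℕ) = (i : ℕ) => hk (Fin.ext hc)) with hlt | hgt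
    · rw [hA.2.2 k j (by omega)]; ring
    · rw [hv.2 i k hgt]; ring
  · simp

lemma mulMs_upper {n : ℕ} {v A : Matrix (Fin n) (Fin n) ℂ} (hv : LowerUnipotent v)
    (hA : InMs A) (i j : Fin n) (h : (i : ℕ) + 1 < (j : ℕ)) : (v * A) i j = 0 := by
  rw [Matrix.mul_apply]
  apply Finset.sum_eq_zero
  intro k _
  rcases le_or_gt (k : ℕ) (i : ℕ) with hle | hgt
  · rw [hA.2.2 k j (by omega)]; ring
  · rw [hv.2 i k hgt]; ring

lemma Fstep_lowerUnipotent {n : ℕ} {v A : Matrix (Fin n) (Fin n) ℂ} (hv : LowerUnipotent v)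
    (hA : InMs A) : LowerUnipotent (Fstep A v) := by
  have hEntry : ∀ i j : Fin n, (Fstep A v) i j = (Emat n) i j - (Dmat n * (v * A)) i j := by
    intro i j
    simp [Fstep, Matrix.sub_apply, Matrix.mul_assoc]
  constructor
  · intro i
    rw [hEntry]
    rcases Nat.eq_zero_or_pos (i : ℕ) with hi | hi
    · rw [Dmul_zero _ _ _ hi]
      simp [Emat, hi]
    · have hlt : (i : ℕ) - 1 < n := by have := i.isLt; omega
      have h : (i : ℕ) = ((⟨(i : ℕ) - 1, hlt⟩ : Fin n) : ℕ) + 1 := by simp; omega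
      rw [Dmul_succ _ _ _ _ h, mulMs_superdiag hv hA _ i (by simp; omega)]
      have hE : Emat n i i = 0 := by
        simp only [Emat, Matrix.of_apply, if_neg (show ¬((i : ℕ) = 0 ∧ (i : ℕ) = 0) by omega)]
      rw [hE]; ring
  · intro i j hij
    rw [hEntry]
    rcases Nat.eq_zero_or_pos (i : ℕ) with hi | hi
    · rw [Dmul_zero _ _ _ hi]
      have : ¬((i : ℕ) = 0 ∧ (j : ℕ) = 0) := by omega
      simp [Emat, this]
    · have hlt : (i : ℕ) - 1 < n := by have := i.isLt; omega
      have h : (i : ℕ) = ((⟨(i : ℕ) - 1, hlt⟩ : Fin n) : ℕ) + 1 := by simp; omega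
      rw [Dmul_succ _ _ _ _ h, mulMs_upper hv hA _ j (by simp; omega)]
      have hE : Emat n i j = 0 := by
        simp only [Emat, Matrix.of_apply, if_neg (show ¬((i : ℕ) = 0 ∧ (j : ℕ) = 0) by omega)]
      rw [hE]; ring


lemma det_companion_rows {n : ℕ} (hn : 1 ≤ n) (C : Matrix (Fin n) (Fin n) ℂ)
    (hrows : ∀ i j : Fin n, (i : ℕ) < n - 1 →
      C i j = if (j : ℕ) = (i : ℕ) + 1 then -1 else 0) :
    C.det = C ⟨n - 1, by omega⟩ ⟨0, by omega⟩ := by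
  obtain ⟨n', rfl⟩ := Nat.exists_eq_succ_of_ne_zero (by omega : n ≠ 0)
  rw [Matrix.det_succ_column_zero]
  rw [Finset.sum_eq_single (Fin.last n')]
  · have hsub : (C.submatrix (Fin.last n').succAbove Fin.succ) = (-1 : ℂ) • 1 := by
      ext i j
      have h1 : ((Fin.last n').succAbove i : ℕ) = (i : ℕ) := by
        simp [Fin.succAbove, Fin.lt_iff_val_lt_val]
      rw [Matrix.submatrix_apply, hrows _ _ (by rw [h1]; have := i.isLt; omega)]
      simp only [Matrix.smul_apply, Matrix.one_apply, h1, Fin.val_succ]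
      by_cases hij : (i : ℕ) = (j : ℕ)
      · have : i = j := Fin.ext hij
        simp [this]
      · have h2 : ¬ ((j : ℕ) + 1 = (i : ℕ) + 1) := by omega
        have h3 : i ≠ j := fun hc => hij (by rw [hc])
        rw [if_neg (by rw [h1] at *; omega)]
        simp [h3]
    rw [hsub, Matrix.det_smul, Matrix.det_one, mul_one]
    have hkey : ((-1 : ℂ) ^ (n' : ℕ)) * ((-1 : ℂ) ^ (n' : ℕ)) = 1 := by
      rw [← pow_add]
      exact Even.neg_one_pow ⟨n', rfl⟩
    have hcard : Fintype.card (Fin n') = n' := by simp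
    have hC : C ⟨n'.succ - 1, by omega⟩ ⟨0, by omega⟩ = C (Fin.last n') 0 := by
      congr 1 <;> exact Fin.ext (by simp)
    rw [hcard, hC, Fin.val_last]
    linear_combination (C (Fin.last n') 0) * hkey
  · intro i _ hi
    have hilt : (i : ℕ) < n' := by
      have := i.isLt
      have : (i : ℕ) ≠ n' := fun hc => hi (Fin.ext (by simp [hc]))
      omega
    rw [hrows i 0 (by simpa using hilt)]
    simp
  · simp

lemma step_companion_iff {n : ℕ} (hn : 2 ≤ n) {A v w : Matrix (Fin n) (Fin n) ℂ}
    (hA : InMs A) (hv : LowerUnipotent v) (hw : LowerUnipotent w) :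
    CompanionForm (v * A * w⁻¹) ↔ w = Fstep A v := by
  have hdetw : w.det = 1 := det_lowerUnipotent hw
  have hu : IsUnit w.det := by rw [hdetw]; exact isUnit_one
  have hwinv : w⁻¹ * w = 1 := Matrix.nonsing_inv_mul w hu
  have hwinv' : w * w⁻¹ = 1 := Matrix.mul_nonsing_inv w hu
  have hCw : (v * A * w⁻¹) * w = v * A := by
    rw [Matrix.mul_assoc, hwinv, Matrix.mul_one]
  constructor
  · intro hC
    ext i j
    rcases Nat.eq_zero_or_pos (i : ℕ) with hi | hi
    · have hi0 : i = ⟨0, by omega⟩ := Fin.ext hi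
      have hF : Fstep A v i j = if (j : ℕ) = 0 then 1 else 0 := by
        simp only [Fstep, Matrix.sub_apply, Matrix.mul_assoc]
        rw [Dmul_zero _ _ _ hi]
        simp only [Emat, Matrix.of_apply, hi, true_and, sub_zero]
      rw [hF]
      by_cases hj : (j : ℕ) = 0
      · have : j = i := Fin.ext (by omega)
        rw [this, hw.1, if_pos (by omega)]
      · rw [if_neg hj, hw.2 i j (by omega)]
    · -- i = i' + 1
      have hlt : (i : ℕ) - 1 < n := by have := i.isLt; omega
      set i' : Fin n := ⟨(i : ℕ) - 1, hlt⟩ with hi'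
      have hsucc : (i : ℕ) = (i' : ℕ) + 1 := by simp [hi']; omega
      have hi'lt : (i' : ℕ) < n - 1 := by have := i.isLt; simp [hi']; omega
      have hrow : ∀ k : Fin n, (v * A * w⁻¹) i' k = if (k : ℕ) = (i' : ℕ) + 1 then -1 else 0 := by
        intro k
        by_cases hk : (k : ℕ) = (i' : ℕ) + 1
        · rw [if_pos hk]; exact hC.1 i' k hk
        · rw [if_neg hk]; exact hC.2.1 i' k hi'lt hk
      have hsum : ((v * A * w⁻¹) * w) i' j = -(w i j) := by
        rw [Matrix.mul_apply]
        rw [Finset.sum_eq_single i]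
        · rw [hrow i, if_pos hsucc]; ring
        · intro k _ hk
          rw [hrow k, if_neg (fun hc => hk (Fin.ext (by omega)))]
          ring
        · simp
      have hvA : (v * A) i' j = -(w i j) := by rw [← hCw]; exact hsum
      have hF : Fstep A v i j = -((v * A) i' j) := by
        simp only [Fstep, Matrix.sub_apply, Matrix.mul_assoc]
        rw [Dmul_succ _ i' i j hsucc]
        have hE : Emat n i j = 0 := by
          simp only [Emat, Matrix.of_apply,
            if_neg (show ¬((i : ℕ) = 0 ∧ (j : ℕ) = 0) by omega)]
        rw [hE]; ring
      rw [hF, hvA]; ring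
  · intro hwF
    -- define C' and show C' * w = v * A
    set C' : Matrix (Fin n) (Fin n) ℂ := Matrix.of fun i j =>
      if (i : ℕ) < n - 1 then (if (j : ℕ) = (i : ℕ) + 1 then -1 else 0)
      else (v * A * w⁻¹) i j with hC'def
    have hC'w : C' * w = v * A := by
      ext i j
      by_cases hi : (i : ℕ) < n - 1
      · have hsu : (i : ℕ) + 1 < n := by omega
        set i1 : Fin n := ⟨(i : ℕ) + 1, hsu⟩ with hi1
        rw [Matrix.mul_apply]
        rw [Finset.sum_eq_single i1]
        · have : C' i i1 = -1 := by
            simp only [hC'def, Matrix.of_apply, if_pos hi]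
            rw [if_pos (by simp [hi1])]
          rw [this]
          have hwval : w i1 j = -((v * A) i j) := by
            rw [hwF]
            simp only [Fstep, Matrix.sub_apply, Matrix.mul_assoc]
            rw [Dmul_succ (v * A) i i1 j (by simp [hi1])]
            have hE : Emat n i1 j = 0 := by
              simp only [Emat, Matrix.of_apply,
                if_neg (show ¬((i1 : ℕ) = 0 ∧ (j : ℕ) = 0) by simp [hi1])]
            rw [hE]; ring
          rw [hwval]; ring
        · intro k _ hk
          have : C' i k = 0 := by
            simp only [hC'def, Matrix.of_apply, if_pos hi]
            rw [if_neg (fun hc => hk (Fin.ext (by simp [hi1]; omega)))]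
          rw [this]; ring
        · simp
      · have hieq : C' i = (v * A * w⁻¹) i := by
          funext k
          simp only [hC'def, Matrix.of_apply, if_neg hi]
        rw [Matrix.mul_apply]
        have : ∀ k, C' i k * w k j = (v * A * w⁻¹) i k * w k j := by
          intro k; rw [hieq]
        rw [Finset.sum_congr rfl (fun k _ => this k)]
        rw [← Matrix.mul_apply, hCw]
    have hC'eq : C' = v * A * w⁻¹ := by
      calc C' = C' * (w * w⁻¹) := by rw [hwinv', Matrix.mul_one]
      _ = (C' * w) * w⁻¹ := by rw [Matrix.mul_assoc]
      _ = v * A * w⁻¹ := by rw [hC'w]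
    rw [← hC'eq]
    have hdet : C'.det = 1 := by
      rw [hC'eq]
      have : (v * A * w⁻¹).det = v.det * A.det * w⁻¹.det := by
        rw [Matrix.det_mul, Matrix.det_mul]
      rw [this, det_lowerUnipotent hv, hA.1, Matrix.det_nonsing_inv, hdetw]
      simp
    refine ⟨?_, ?_, ?_⟩
    · intro i j hj
      have hi : (i : ℕ) < n - 1 := by have := j.isLt; omega
      simp only [hC'def, Matrix.of_apply, if_pos hi, if_pos hj]
    · intro i j hi hj
      simp only [hC'def, Matrix.of_apply, if_pos hi, if_neg hj]
    · intro i j hi hj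
      have hieq : i = ⟨n - 1, by omega⟩ := Fin.ext (by simpa using hi)
      have hjeq : j = ⟨0, by omega⟩ := Fin.ext (by simpa using hj)
      rw [hieq, hjeq, ← det_companion_rows (by omega) C' ?_, hdet]
      intro i j hi
      simp only [hC'def, Matrix.of_apply, if_pos hi]

noncomputable def Psi {n m : ℕ} (L : ZMod m → Matrix (Fin n) (Fin n) ℂ)
    (u : ZMod m → Matrix (Fin n) (Fin n) ℂ) : ZMod m → Matrix (Fin n) (Fin n) ℂ :=
  fun a => Fstep (L a) (u (a + 1))

lemma iterate_diff {n m : ℕ} (L : ZMod m → Matrix (Fin n) (Fin n) ℂ) :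
    ∀ (k : ℕ) (u u' : ZMod m → Matrix (Fin n) (Fin n) ℂ) (a : ZMod m),
    ∃ M, (Psi L)^[k] u a - (Psi L)^[k] u' a = (Dmat n) ^ k * M := by
  intro k
  induction k with
  | zero => intro u u' a; exact ⟨u a - u' a, by simp⟩
  | succ k ih =>
    intro u u' a
    obtain ⟨M, hM⟩ := ih u u' (a + 1)
    refine ⟨-(M * L a), ?_⟩
    rw [Function.iterate_succ_apply', Function.iterate_succ_apply']
    show Fstep (L a) ((Psi L)^[k] u (a + 1)) - Fstep (L a) ((Psi L)^[k] u' (a + 1)) = _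
    simp only [Fstep]
    have hsub : ∀ X Y : Matrix (Fin n) (Fin n) ℂ,
        (Emat n - Dmat n * X * L a) - (Emat n - Dmat n * Y * L a)
          = -(Dmat n * (X - Y) * L a) := by
      intro X Y; noncomm_ring
    rw [hsub, hM, pow_succ']
    noncomm_ring

lemma iterate_unipotent {n m : ℕ} (L : ZMod m → Matrix (Fin n) (Fin n) ℂ)
    (hL : ∀ a, InMs (L a)) (u0 : ZMod m → Matrix (Fin n) (Fin n) ℂ)
    (h0 : ∀ a, LowerUnipotent (u0 a)) :
    ∀ (k : ℕ) (a : ZMod m), LowerUnipotent ((Psi L)^[k] u0 a) := by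
  intro k
  induction k with
  | zero => exact h0
  | succ k ih =>
    intro a
    rw [Function.iterate_succ_apply']
    exact Fstep_lowerUnipotent (ih (a + 1)) (hL a)

lemma one_lowerUnipotent {n : ℕ} : LowerUnipotent (1 : Matrix (Fin n) (Fin n) ℂ) := by
  constructor
  · intro i; exact Matrix.one_apply_eq i
  · intro i j hij
    exact Matrix.one_apply_ne (fun hc => by subst hc; omega)

end CSAux


/-- The lattice cross-section theorem for `G = SL(n)`: for every configuration
`L : ℤ/mℤ → Mₙ(ℂ)` with values in `Mˢ` there is a unique lattice gauge
transformation `u` with lower unipotent values such that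
`a ↦ u(a+1)·L(a)·u(a)⁻¹` is everywhere in companion form. -/
theorem lattice_crossSection_SLn (n : ℕ) (hn : 2 ≤ n) (m : ℕ) (hm : 1 ≤ m)
    (L : ZMod m → Matrix (Fin n) (Fin n) ℂ) (hL : ∀ a : ZMod m, InMs (L a)) :
    ∃! u : ZMod m → Matrix (Fin n) (Fin n) ℂ,
      (∀ a : ZMod m, LowerUnipotent (u a)) ∧
      ∀ a : ZMod m, CompanionForm (u (a + 1) * L a * (u a)⁻¹) := by
  classical
  set Ψ := CSAux.Psi L with hΨ
  set u0 : ZMod m → Matrix (Fin n) (Fin n) ℂ := fun _ => 1 with hu0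
  set ustar := Ψ^[n] u0 with hustar
  have huni : ∀ a, LowerUnipotent (ustar a) :=
    CSAux.iterate_unipotent L hL u0 (fun _ => CSAux.one_lowerUnipotent) n
  have hfix : Ψ ustar = ustar := by
    funext a
    obtain ⟨M, hM⟩ := CSAux.iterate_diff L n (Ψ u0) u0 a
    rw [CSAux.Dpow_n, Matrix.zero_mul] at hM
    have h1 : Ψ^[n] (Ψ u0) = Ψ (Ψ^[n] u0) := by
      rw [← Function.iterate_succ_apply, Function.iterate_succ_apply']
    rw [h1] at hM
    have := sub_eq_zero.mp hM
    exact this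
  refine ⟨ustar, ⟨huni, ?_⟩, ?_⟩
  · intro a
    rw [CSAux.step_companion_iff hn (hL a) (huni (a + 1)) (huni a)]
    exact (congrFun hfix a).symm
  · rintro u ⟨hu1, hu2⟩
    have hufix : Ψ u = u := by
      funext a
      exact ((CSAux.step_companion_iff hn (hL a) (hu1 (a + 1)) (hu1 a)).mp (hu2 a)).symm
    have h1 : Ψ^[n] u = u := Function.iterate_fixed hufix n
    have h2 : Ψ^[n] ustar = ustar := Function.iterate_fixed hfix n
    funext a
    obtain ⟨M, hM⟩ := CSAux.iterate_diff L n u ustar a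
    rw [h1, h2, CSAux.Dpow_n, Matrix.zero_mul] at hM
    exact sub_eq_zero.mp hM
end

section
/- Let n ≥ 2 and let q be a nonzero complex number. (i) Invariance: if u : ℂ → Mₙ(ℂ) takes lower unipotent values and L : ℂ → Mₙ(ℂ) takes values in M^s, then the function z ↦ u(qz)·L(z)·u(z)⁻¹ also takes values in M^s; that is, the q-gauge action of the lower unipotent loop group leaves the cell M^s invariant. (ii) Freeness: if moreover u(qz)·L(z)·u(z)⁻¹ = L(z) for all z ∈ ℂ, then u(z) is the identity matrix for all z ∈ ℂ; that is, the q-gauge action of the lower unipotent loop group on loops in M^s is free. -/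
/-!
Say `A.UpperBandwidthLE m` (`m : ℤ`) when `A` vanishes strictly above its `m`-th diagonal.
Bandwidths add under multiplication, and on the extreme diagonal the product is just the
product of the extreme diagonals of the factors. Lower unipotent matrices have bandwidth `0`
and unit diagonal, matrices in `Mˢ` have bandwidth `1` and superdiagonal `-1`; this gives
invariance at once.

For freeness put `N z = u z - 1`, of bandwidth `-1`; the fixed-point equation becomes
`N (q z) L z = L z N z`. If every `N z` has bandwidth `m`, comparing the `(m + 1)`-th
diagonals of the two sides shows that the `m`-th diagonal of `N (q z)` is that of `N z`
shifted one step down, and that it vanishes in the last row. As `z ↦ q z` is onto, that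
diagonal vanishes, so every `N z` has bandwidth `m - 1`; after `n` steps `N = 0`.
-/

namespace Matrix

variable {n : ℕ} {R : Type*}

def UpperBandwidthLE [Zero R] (A : Matrix (Fin n) (Fin n) R) (m : ℤ) : Prop :=
  ∀ i j : Fin n, (i : ℤ) + m < j → A i j = 0

namespace UpperBandwidthLE

variable [NonUnitalNonAssocSemiring R] {A B : Matrix (Fin n) (Fin n) R} {a b : ℤ}

theorem mul (hA : A.UpperBandwidthLE a) (hB : B.UpperBandwidthLE b) :
    (A * B).UpperBandwidthLE (a + b) := by
  intro i j hij
  rw [mul_apply]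
  refine Finset.sum_eq_zero fun k _ => ?_
  by_cases hik : (i : ℤ) + a < k
  · rw [hA i k hik, zero_mul]
  · rw [hB k j (by omega), mul_zero]

theorem mul_apply_of_eq (hA : A.UpperBandwidthLE a) (hB : B.UpperBandwidthLE b)
    {i j k : Fin n} (hk : (k : ℤ) = i + a) (hj : (j : ℤ) = k + b) :
    (A * B) i j = A i k * B k j := by
  rw [mul_apply]
  refine Finset.sum_eq_single k (fun l _ hlk => ?_) (by simp)
  have hl : (l : ℤ) ≠ k := fun h => hlk (Fin.ext (by omega))
  rcases hl.lt_or_gt with hl | hl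
  · rw [hB l j (by omega), mul_zero]
  · rw [hA i l (by omega), zero_mul]

theorem mul_apply_eq_zero (hA : A.UpperBandwidthLE a) (hB : B.UpperBandwidthLE b)
    {i j : Fin n} (hj : (i : ℤ) + a + b ≤ j) (hk : ∀ k : Fin n, (k : ℤ) ≠ i + a) :
    (A * B) i j = 0 := by
  rw [mul_apply]
  refine Finset.sum_eq_zero fun k _ => ?_
  rcases (hk k).lt_or_gt with hl | hl
  · rw [hB k j (by omega), mul_zero]
  · rw [hA i k (by omega), zero_mul]

theorem eq_zero {m : ℤ} (h : A.UpperBandwidthLE m) (hm : m ≤ -n) : A = 0 := by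
  ext i j
  exact h i j (by have := i.isLt; omega)

end UpperBandwidthLE

section TwistedCommute

variable [Ring R] {A B L : Matrix (Fin n) (Fin n) R} {m : ℤ}

theorem apply_eq_apply_of_mul_eq_mul (hA : A.UpperBandwidthLE m) (hB : B.UpperBandwidthLE m)
    (hL : L.UpperBandwidthLE 1) (hsup : ∀ i j : Fin n, (j : ℕ) = (i : ℕ) + 1 → L i j = -1)
    (h : A * L = L * B) {a b a' b' : Fin n} (hb : (b : ℤ) = a + m)
    (ha' : (a' : ℕ) = a + 1) (hb' : (b' : ℕ) = b + 1) :
    A a b = B a' b' := by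
  have hab := congrFun (congrFun h a) b'
  rw [hA.mul_apply_of_eq hL hb (by omega), hL.mul_apply_of_eq hB (k := a') (by omega) (by omega),
    hsup b b' hb', hsup a a' ha'] at hab
  simpa using hab

theorem apply_eq_zero_of_mul_eq_mul (hA : A.UpperBandwidthLE m) (hB : B.UpperBandwidthLE m)
    (hL : L.UpperBandwidthLE 1) (hsup : ∀ i j : Fin n, (j : ℕ) = (i : ℕ) + 1 → L i j = -1)
    (h : A * L = L * B) {a b b' : Fin n} (hb : (b : ℤ) = a + m)
    (ha : (a : ℕ) + 1 = n) (hb' : (b' : ℕ) = b + 1) :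
    A a b = 0 := by
  have hab := congrFun (congrFun h a) b'
  rw [hA.mul_apply_of_eq hL hb (by omega), hsup b b' hb',
    hL.mul_apply_eq_zero hB (by omega) (fun k => by have := k.isLt; omega)] at hab
  simpa using hab

variable {X : Type*} {σ : X → X} {N L : X → Matrix (Fin n) (Fin n) R}

theorem upperBandwidthLE_sub_one_of_twisted_commute (hσ : Function.Surjective σ)
    (hL : ∀ x, (L x).UpperBandwidthLE 1)
    (hsup : ∀ x, ∀ i j : Fin n, (j : ℕ) = (i : ℕ) + 1 → L x i j = -1)
    (hNL : ∀ x, N (σ x) * L x = L x * N x) (hm : m < 0) (hN : ∀ x, (N x).UpperBandwidthLE m) :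
    ∀ x, (N x).UpperBandwidthLE (m - 1) := by
  suffices hdiag : ∀ k : ℕ, ∀ x, ∀ a b : Fin n, (a : ℕ) + k + 1 = n → (b : ℤ) = a + m →
      N x a b = 0 by
    intro x a b hab
    rcases (show (b : ℤ) = a + m ∨ (a : ℤ) + m < b by omega) with hb | hb
    · exact hdiag (n - 1 - a) x a b (by have := a.isLt; omega) hb
    · exact hN x a b hb
  intro k
  induction k with
  | zero =>
    intro x a b ha hb
    obtain ⟨y, rfl⟩ := hσ x
    exact apply_eq_zero_of_mul_eq_mul (b' := ⟨b + 1, by omega⟩) (hN _) (hN y) (hL y) (hsup y)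
      (hNL y) hb (by omega) rfl
  | succ k ih =>
    intro x a b ha hb
    obtain ⟨y, rfl⟩ := hσ x
    rw [apply_eq_apply_of_mul_eq_mul (a' := ⟨a + 1, by omega⟩) (b' := ⟨b + 1, by omega⟩) (hN _)
      (hN y) (hL y) (hsup y) (hNL y) hb rfl rfl]
    exact ih y _ _ (by simp only; omega) (by push_cast; omega)

theorem eq_zero_of_twisted_commute (hσ : Function.Surjective σ)
    (hL : ∀ x, (L x).UpperBandwidthLE 1)
    (hsup : ∀ x, ∀ i j : Fin n, (j : ℕ) = (i : ℕ) + 1 → L x i j = -1)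
    (hNL : ∀ x, N (σ x) * L x = L x * N x) (hN : ∀ x, (N x).UpperBandwidthLE (-1)) (x : X) :
    N x = 0 := by
  have hband : ∀ d : ℕ, ∀ x, (N x).UpperBandwidthLE (-(d + 1)) := by
    intro d
    induction d with
    | zero => simpa using hN
    | succ d ih =>
      have := upperBandwidthLE_sub_one_of_twisted_commute hσ hL hsup hNL (by omega) ih
      simpa [sub_eq_add_neg, add_comm, add_left_comm] using this
  exact (hband n x).eq_zero (by omega)

end TwistedCommute

end Matrix

namespace LowerUnipotent

variable {n : ℕ} {A : Matrix (Fin n) (Fin n) ℂ}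

theorem upperBandwidthLE (h : LowerUnipotent A) : A.UpperBandwidthLE 0 :=
  fun i j hij => h.2 i j (by omega)

theorem isLowerTriangular_s12 (h : LowerUnipotent A) : A.IsLowerTriangular :=
  fun i j hij => h.2 i j hij

theorem sub_one (h : LowerUnipotent A) : (A - 1).UpperBandwidthLE (-1) := by
  intro i j hij
  rcases (show (i : ℕ) = j ∨ (i : ℕ) < j by omega) with hij | hij
  · obtain rfl := Fin.ext hij
    simp [h.1 i]
  · simp [h.2 i j hij, Matrix.one_apply_ne (Fin.ne_of_lt hij)]

theorem det (h : LowerUnipotent A) : A.det = 1 := by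
  rw [Matrix.det_of_isLowerTriangular A h.isLowerTriangular_s12]
  simp [h.1]

theorem isUnit_det (h : LowerUnipotent A) : IsUnit A.det :=
  h.det ▸ isUnit_one

theorem inv (h : LowerUnipotent A) : LowerUnipotent A⁻¹ := by
  have : Invertible A := A.invertibleOfIsUnitDet h.isUnit_det
  have hinv : A⁻¹.UpperBandwidthLE 0 := fun i j hij =>
    Matrix.blockTriangular_inv_of_blockTriangular h.isLowerTriangular_s12 (show (i : ℕ) < j by omega)
  refine ⟨fun i => ?_, fun i j hij => hinv i j (by omega)⟩
  have hii := congrFun (congrFun (A.nonsing_inv_mul h.isUnit_det) i) i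
  rwa [hinv.mul_apply_of_eq h.upperBandwidthLE (k := i) (by simp) (by simp), h.1 i, mul_one,
    Matrix.one_apply_eq] at hii

end LowerUnipotent

namespace InMs

variable {n : ℕ} {A : Matrix (Fin n) (Fin n) ℂ}

theorem upperBandwidthLE (h : InMs A) : A.UpperBandwidthLE 1 :=
  fun i j hij => h.2.2 i j (by omega)

theorem lowerUnipotent_mul_mul {U V : Matrix (Fin n) (Fin n) ℂ} (h : InMs A)
    (hU : LowerUnipotent U) (hV : LowerUnipotent V) : InMs (U * A * V) := by
  have hUA := hU.upperBandwidthLE.mul h.upperBandwidthLE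
  refine ⟨by simp [Matrix.det_mul, hU.det, h.1, hV.det], fun i j hij => ?_,
    fun i j hij => (hUA.mul hV.upperBandwidthLE) i j (by omega)⟩
  rw [hUA.mul_apply_of_eq hV.upperBandwidthLE (k := j) (by omega) (by simp),
    hU.upperBandwidthLE.mul_apply_of_eq h.upperBandwidthLE (k := i) (by simp) (by omega),
    hU.1 i, h.2.1 i j hij, hV.1 j]
  simp

end InMs

theorem q_gauge_invariance_and_freeness_general (n : ℕ) (q : ℂ) (hq : q ≠ 0)
    (u L : ℂ → Matrix (Fin n) (Fin n) ℂ)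
    (hu : ∀ z : ℂ, LowerUnipotent (u z)) (hL : ∀ z : ℂ, InMs (L z)) :
    (∀ z : ℂ, InMs (u (q * z) * L z * (u z)⁻¹)) ∧
    ((∀ z : ℂ, u (q * z) * L z * (u z)⁻¹ = L z) →
      ∀ z : ℂ, u z = (1 : Matrix (Fin n) (Fin n) ℂ)) := by
  refine ⟨fun z => (hL z).lowerUnipotent_mul_mul (hu _) (hu z).inv, fun hfix z => ?_⟩
  have hcomm : ∀ w, (u (q * w) - 1) * L w = L w * (u w - 1) := fun w => by
    calc (u (q * w) - 1) * L w = u (q * w) * L w * (u w)⁻¹ * u w - L w := by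
          rw [sub_mul, one_mul, Matrix.nonsing_inv_mul_cancel_right (u w) _ (hu w).isUnit_det]
      _ = L w * (u w - 1) := by rw [hfix w, mul_sub, mul_one]
  have hsurj : Function.Surjective (q * ·) := fun w => ⟨w / q, mul_div_cancel₀ w hq⟩
  exact sub_eq_zero.mp <| Matrix.eq_zero_of_twisted_commute hsurj
    (fun w => (hL w).upperBandwidthLE) (fun w => (hL w).2.1) hcomm (fun w => (hu w).sub_one) z

/-- The q-gauge action of the lower unipotent loop group leaves the cell `Mˢ`
invariant, and acts freely on loops with values in `Mˢ`. -/
theorem q_gauge_invariance_and_freeness (n : ℕ) (hn : 2 ≤ n) (q : ℂ) (hq : q ≠ 0)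
    (u L : ℂ → Matrix (Fin n) (Fin n) ℂ)
    (hu : ∀ z : ℂ, LowerUnipotent (u z)) (hL : ∀ z : ℂ, InMs (L z)) :
    (∀ z : ℂ, InMs (u (q * z) * L z * (u z)⁻¹)) ∧
    ((∀ z : ℂ, u (q * z) * L z * (u z)⁻¹ = L z) →
      ∀ z : ℂ, u z = (1 : Matrix (Fin n) (Fin n) ℂ)) :=
  q_gauge_invariance_and_freeness_general n q hq u L hu hL
end

section
/- Let n ≥ 2 and m ≥ 1 with m and n coprime. Let V = {v ∈ ℂⁿ : v₁ + … + vₙ = 0} and let c : V → V be the cyclic shift (c v)_i = v_{i−1 (mod n)}. Let W be the space of functions f : ℤ/mℤ → V and define the linear endomorphism T of W by (T f)(a) = c(f(a+1)). Then Id − T is a bijective linear endomorphism of W. (This is the statement that, on the lattice Γ = ℤ/mℤ with lattice length coprime to the Coxeter number h = n, the operator I − θ with θ = R_s·τ — the Coxeter element acting on the Cartan subalgebra of sl(n) composed with the cyclic shift of the lattice — is invertible, which is the consistency condition for the lattice Drinfeld–Sokolov reduction.) -/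
/-!
A solution `f` of `f(a) - c(f(a+1)) = g(a)` is a function on `ℤ/mℤ × ℤ/nℤ`, and the operator
`θ` is translation by `(1, -1)`. If `θ f = f`, translating `m` times shows that each `f(a)` is
invariant under `i ↦ i - m`; as `m` is a unit mod `n`, `f(a)` is constant, hence zero since it
has sum zero. So `Id - θ` is injective on the finite-dimensional space of functions with values
in `V`, which it preserves, and therefore bijective there.
-/

open Finset Function

theorem LinearMap.existsUnique_mem_apply_eq_of_injOn {K V : Type*} [Field K] [AddCommGroup V]
    [Module K V] [FiniteDimensional K V] (L : V →ₗ[K] V) (p : Submodule K V)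
    (hmaps : ∀ x ∈ p, L x ∈ p) (hker : ∀ x ∈ p, L x = 0 → x = 0) {g : V} (hg : g ∈ p) :
    ∃! f, f ∈ p ∧ L f = g := by
  set L₀ : p →ₗ[K] p := L.restrict hmaps
  have hinj : Injective L₀ := by
    refine (injective_iff_map_eq_zero L₀).mpr fun x hx => Subtype.ext ?_
    exact hker x x.2 (congrArg Subtype.val hx)
  obtain ⟨f, hf⟩ := (LinearMap.injective_iff_surjective.mp hinj) ⟨g, hg⟩
  refine ⟨f, ⟨f.2, congrArg Subtype.val hf⟩, fun f' ⟨hf'p, hf'g⟩ => ?_⟩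
  have : L₀ ⟨f', hf'p⟩ = L₀ f := Subtype.ext (hf'g.trans (congrArg Subtype.val hf).symm)
  exact congrArg Subtype.val (hinj this)

theorem Function.Periodic.apply_eq_apply_of_isUnit {n : ℕ} [NeZero n] {α : Type*}
    {φ : ZMod n → α} {u : ZMod n} (h : Periodic φ u) (hu : IsUnit u) (i j : ZMod n) :
    φ j = φ i := by
  obtain ⟨v, rfl⟩ := hu
  have hj : j = i + ((v⁻¹ : (ZMod n)ˣ) * (j - i)).val • (v : ZMod n) := by
    rw [nsmul_eq_mul, ZMod.natCast_zmod_val, mul_comm, ← mul_assoc, Units.mul_inv, one_mul,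
      add_sub_cancel]
  rw [hj]
  exact h.nsmul _ i

variable (K : Type*) [Field K] (m n : ℕ)

def rowSumZero [NeZero n] : Submodule K (ZMod m → ZMod n → K) where
  carrier := {f | ∀ a, ∑ i, f a i = 0}
  add_mem' {f g} hf hg a := by
    simp only [Pi.add_apply, sum_add_distrib, (hf a : ∑ i, f a i = 0), (hg a : ∑ i, g a i = 0),
      add_zero]
  zero_mem' _ := by simp
  smul_mem' c f hf a := by simp only [Pi.smul_apply, smul_eq_mul, ← mul_sum,
    (hf a : ∑ i, f a i = 0), mul_zero]

def latticeShift : (ZMod m → ZMod n → K) →ₗ[K] (ZMod m → ZMod n → K) where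
  toFun f a i := f (a + 1) (i - 1)
  map_add' _ _ := rfl
  map_smul' _ _ := rfl

variable {K m n}

theorem latticeShift_apply (f : ZMod m → ZMod n → K) (a : ZMod m) (i : ZMod n) :
    latticeShift K m n f a i = f (a + 1) (i - 1) :=
  rfl

theorem sub_latticeShift_eq_iff {f g : ZMod m → ZMod n → K} :
    f - latticeShift K m n f = g ↔ ∀ a i, f a i - f (a + 1) (i - 1) = g a i := by
  simp only [_root_.funext_iff, Pi.sub_apply, latticeShift_apply]

theorem latticeShift_mem_rowSumZero [NeZero n] {f : ZMod m → ZMod n → K}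
    (hf : f ∈ rowSumZero K m n) : latticeShift K m n f ∈ rowSumZero K m n := fun a =>
  (Equiv.sum_comp (Equiv.subRight 1) (f (a + 1))).trans (hf (a + 1))

theorem eq_zero_of_latticeShift_eq_self [NeZero n] [CharZero K] (hcop : m.Coprime n)
    {f : ZMod m → ZMod n → K} (hf : f ∈ rowSumZero K m n) (hfix : latticeShift K m n f = f) :
    f = 0 := by
  have hper : Periodic (uncurry f) (1, -1) := fun ⟨a, i⟩ => by
    simpa [latticeShift_apply, sub_eq_add_neg] using congrFun (congrFun hfix a) i
  have hrow (a : ZMod m) : Periodic (f a) (-(m : ZMod n)) := fun i => by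
    simpa using hper.nsmul m (a, i)
  have hunit : IsUnit (-(m : ZMod n)) := (ZMod.unitOfCoprime m hcop).isUnit.neg
  funext a i
  have hsum : (n : K) * f a i = 0 := by
    simpa [(hrow a).apply_eq_apply_of_isUnit hunit i, ZMod.card] using hf a
  exact (mul_eq_zero.mp hsum).resolve_left (Nat.cast_ne_zero.mpr (NeZero.ne n))

theorem existsUnique_sub_latticeShift_eq [NeZero m] [NeZero n] [CharZero K] (hcop : m.Coprime n)
    {g : ZMod m → ZMod n → K} (hg : g ∈ rowSumZero K m n) :
    ∃! f, f ∈ rowSumZero K m n ∧ ∀ a i, f a i - f (a + 1) (i - 1) = g a i := by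
  set L := LinearMap.id - latticeShift K m n
  have hmaps (f) (hf : f ∈ rowSumZero K m n) : L f ∈ rowSumZero K m n :=
    sub_mem hf (latticeShift_mem_rowSumZero hf)
  have hker (f) (hf : f ∈ rowSumZero K m n) (h0 : L f = 0) : f = 0 :=
    eq_zero_of_latticeShift_eq_self hcop hf (sub_eq_zero.mp h0).symm
  simpa only [L, LinearMap.sub_apply, LinearMap.id_apply, sub_latticeShift_eq_iff] using
    L.existsUnique_mem_apply_eq_of_injOn _ hmaps hker hg

theorem lattice_coxeter_shift_invertible_general (n m : ℕ) [NeZero n]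
    (hm : 1 ≤ m) (hcop : Nat.Coprime m n) :
    ∀ g : ZMod m → Fin n → ℂ, (∀ a, ∑ i, g a i = 0) →
      ∃! f : ZMod m → Fin n → ℂ,
        (∀ a, ∑ i, f a i = 0) ∧
        ∀ (a : ZMod m) (i : Fin n), f a i - f (a + 1) (i - 1) = g a i := by
  intro g hg
  have : NeZero m := ⟨by omega⟩
  -- `Fin (n + 1)` is definitionally `ZMod (n + 1)`, with the same additive structure.
  obtain ⟨n, rfl⟩ := Nat.exists_eq_succ_of_ne_zero (NeZero.ne n)
  exact existsUnique_sub_latticeShift_eq hcop hg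

/-- On the periodic lattice `Γ = ℤ/mℤ` with lattice length `m` coprime to the
Coxeter number `h = n` of `sl(n)`, the operator `Id - θ` with `θ = R_s·τ`
(the cyclic shift `c` on the Cartan subalgebra
`V = {v ∈ ℂⁿ : Σ vᵢ = 0}`, composed with the lattice shift `a ↦ a+1`)
is a bijective linear endomorphism of the space of `V`-valued lattice functions:
for every `g` with values in `V` there is a unique `f` with values in `V` such
that `f(a) - c(f(a+1)) = g(a)` for all `a`, where `c(v)ᵢ = v_{i-1 (mod n)}`. -/
theorem lattice_coxeter_shift_invertible (n m : ℕ) (hn : 2 ≤ n) [NeZero n]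
    (hm : 1 ≤ m) (hcop : Nat.Coprime m n) :
    ∀ g : ZMod m → Fin n → ℂ, (∀ a, ∑ i, g a i = 0) →
      ∃! f : ZMod m → Fin n → ℂ,
        (∀ a, ∑ i, f a i = 0) ∧
        ∀ (a : ZMod m) (i : Fin n), f a i - f (a + 1) (i - 1) = g a i :=
  lattice_coxeter_shift_invertible_general n m hm hcop
end
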